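/- Let J be an almost complex structure on h_{2n+2} interchanging V₁ = Span{X¹,…,X^{n+1}} and V₂ = Span{X^{n+2},…,X^{2n+2}}, and let ln = Span{X^{n+2},…,X^{2n+1}, JX^{n+2},…,JX^{2n+1}}. Then ln is an IJ-subalgebra of h_{2n+2}: it is a J-invariant Lie subalgebra containing the image of the Nijenhuis tensor, and [X,Y] + J[X,JY] ∈ ln whenever X ∈ ln and Y ∈ h_{2n+2}. -/

import Mathlib

/-!
Every bracket of `h_{2n+2}` lies in `Span{X (n+1), …, X (2n)} ⊆ ln`, so each of the four
expressions in the conclusion is a combination of brackets and their images under `J`. Since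
`J² = -1`, the space `ln` is `J`-invariant, and all four conditions follow.
-/

open Submodule

section IJSubalgebra

variable {R L : Type*} [CommRing R] [LieRing L] [LieAlgebra R L]

def nijenhuis (J : L →ₗ[R] L) (x y : L) : L :=
  ⁅x, y⁆ + J ⁅J x, y⁆ + J ⁅x, J y⁆ - ⁅J x, J y⁆

def IsIJSubalgebra (J : L →ₗ[R] L) (ln : Submodule R L) : Prop :=
  (∀ x ∈ ln, ∀ y ∈ ln, ⁅x, y⁆ ∈ ln) ∧
  (∀ x ∈ ln, J x ∈ ln) ∧
  (∀ x y : L, nijenhuis J x y ∈ ln) ∧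
  (∀ x ∈ ln, ∀ y : L, ⁅x, y⁆ + J ⁅x, J y⁆ ∈ ln)

theorem isIJSubalgebra_of_lie_mem {J : L →ₗ[R] L} {ln : Submodule R L}
    (hJ : ∀ x ∈ ln, J x ∈ ln) (hlie : ∀ x y : L, ⁅x, y⁆ ∈ ln) : IsIJSubalgebra J ln :=
  ⟨fun x _ y _ => hlie x y, hJ,
    fun x y => sub_mem (add_mem (add_mem (hlie x y) (hJ _ (hlie _ _))) (hJ _ (hlie _ _)))
      (hlie _ _),
    fun x _ y => add_mem (hlie x y) (hJ _ (hlie _ _))⟩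

theorem lie_mem_of_forall_basis_lie_mem {ι : Type*} (b : Module.Basis ι R L)
    {W : Submodule R L} (h : ∀ i j, ⁅b i, b j⁆ ∈ W) (x y : L) : ⁅x, y⁆ ∈ W := by
  have hzero : (LieModule.toEnd R L L : L →ₗ[R] Module.End R L).compr₂ W.mkQ = 0 :=
    b.ext fun i => b.ext fun j => by simpa using h i j
  simpa using LinearMap.congr_fun₂ hzero x y

end IJSubalgebra

/-- For an almost complex structure `J` on `h_{2n+2}` interchanging `V₁` and `V₂`,
the Nijenhuis space `ln = Span{X (n+1),…,X (2n), J (X (n+1)),…,J (X (2n))}` is an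
IJ-subalgebra: a J-invariant Lie subalgebra containing the image of the Nijenhuis
tensor, with `⁅x, y⁆ + J ⁅x, J y⁆ ∈ ln` for `x ∈ ln`, `y ∈ L`. -/
theorem nijenhuis_space_IJ_subalgebra (n : ℕ) (L : Type) [LieRing L] [LieAlgebra ℝ L]
    (X : Module.Basis (Fin (2 * n + 2)) ℝ L)
    (hbr : ∀ i j : Fin (2 * n + 2), ⁅X i, X j⁆ =
      if hij : i.val < n ∧ j.val = n then X ⟨n + 1 + i.val, by omega⟩
      else if hji : j.val < n ∧ i.val = n then -X ⟨n + 1 + j.val, by omega⟩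
      else 0)
    (J : L →ₗ[ℝ] L) (hJ : ∀ x, J (J x) = -x)
    (ln : Submodule ℝ L)
    (hln : ln = Submodule.span ℝ {z : L | ∃ i : Fin (2 * n + 2), n + 1 ≤ i.val ∧ i.val ≤ 2 * n ∧ (z = X i ∨ z = J (X i))}) :
    (∀ x ∈ ln, ∀ y ∈ ln, ⁅x, y⁆ ∈ ln) ∧
    (∀ x ∈ ln, J x ∈ ln) ∧
    (∀ x y : L, ⁅x, y⁆ + J ⁅J x, y⁆ + J ⁅x, J y⁆ - ⁅J x, J y⁆ ∈ ln) ∧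
    (∀ x ∈ ln, ∀ y : L, ⁅x, y⁆ + J ⁅x, J y⁆ ∈ ln) := by
  have hJ_mem : ln ≤ ln.comap J := by
    rw [hln, span_le]
    rintro z ⟨i, h₁, h₂, rfl | rfl⟩
    · exact subset_span ⟨i, h₁, h₂, Or.inr rfl⟩
    · show J (J (X i)) ∈ span ℝ _
      rw [hJ]
      exact neg_mem (subset_span ⟨i, h₁, h₂, Or.inl rfl⟩)
  have hbasis (i j : Fin (2 * n + 2)) : ⁅X i, X j⁆ ∈ ln := by
    rw [hbr, hln]
    split_ifs with hij hji
    · exact subset_span ⟨_, by simp, by simp; omega, Or.inl rfl⟩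
    · exact neg_mem (subset_span ⟨_, by simp, by simp; omega, Or.inl rfl⟩)
    · exact zero_mem _
  exact isIJSubalgebra_of_lie_mem (fun x hx => hJ_mem hx) (lie_mem_of_forall_basis_lie_mem X hbasis)
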